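/- Let (F, G) be a Frobenius pair between abelian categories with enough projectives, and assume G is a separable functor. If the class of Gorenstein projective objects is precovering in C, then the class of Gorenstein projective objects is precovering in D. -/

import Mathlib

open CategoryTheory Limits

/-- An object `M` of an abelian category is *Gorenstein projective* if it is a syzygy
(the kernel `ker(P⁰ → P¹)`) of an acyclic complex `P` of projective objects such that
`Hom(P, Q)` is acyclic for every projective `Q`. -/
def IsGorensteinProjective {A : Type*} [Category A] [Abelian A] (M : A) : Prop :=
  ∃ P : CochainComplex A ℤ,
    (∀ n : ℤ, Projective (P.X n)) ∧
    (∀ n : ℤ, P.ExactAt n) ∧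
    Nonempty (M ≅ P.cycles 0) ∧
    ∀ (Q : A), Projective Q → ∀ (n : ℤ) (f : P.X n ⟶ Q), P.d (n - 1) n ≫ f = 0 →
      ∃ g : P.X (n + 1) ⟶ Q, P.d n (n + 1) ≫ g = f

/-- `φ : X ⟶ M` is an `𝒳`-precover of `M` if `X ∈ 𝒳` and every morphism from an object
of `𝒳` to `M` factors through `φ`. -/
def IsPrecover {A : Type*} [Category A] (𝒳 : A → Prop) {X M : A} (φ : X ⟶ M) : Prop :=
  𝒳 X ∧ ∀ (X' : A), 𝒳 X' → ∀ f : X' ⟶ M, ∃ g : X' ⟶ X, g ≫ φ = f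

/-!
Both functors of a Frobenius pair have adjoints on both sides, so they are exact, preserve
projectives, and the adjunction identifies `Hom(F P, Q)` with `Hom(P, G Q)`; hence they carry
totally acyclic complexes of projectives to such complexes and preserve Gorenstein projectives.
If `φ : X ⟶ G N` is a Gorenstein projective precover, then so is `F φ ≫ ε_N`: a map
`f : Y ⟶ N` from a Gorenstein projective gives `G f = g ≫ φ`, and the section `ξ` of the
counit yields `f = ξ_Y ≫ F g ≫ F φ ≫ ε_N`.
-/

section

variable {C D : Type*} [Category C] [Category D]

lemma CategoryTheory.Adjunction.exists_map_comp_eq_of_comp_eq_zero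
    [HasZeroMorphisms C] [HasZeroMorphisms D] {F : C ⥤ D} {G : D ⥤ C} (adj : F ⊣ G)
    {A B E : C} (u : A ⟶ B) (v : B ⟶ E) {Q : D}
    (hlift : ∀ f : B ⟶ G.obj Q, u ≫ f = 0 → ∃ g : E ⟶ G.obj Q, v ≫ g = f)
    (f : F.obj B ⟶ Q) (hf : F.map u ≫ f = 0) : ∃ g : F.obj E ⟶ Q, F.map v ≫ g = f := by
  have := adj.isRightAdjoint
  obtain ⟨g, hg⟩ := hlift (adj.homEquiv _ _ f) (by
    rw [← adj.homEquiv_naturality_left, hf, adj.homEquiv_unit, G.map_zero, comp_zero])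
  exact ⟨(adj.homEquiv _ _).symm g, by
    rw [← adj.homEquiv_naturality_left_symm, hg, Equiv.symm_apply_apply]⟩

theorem IsGorensteinProjective.map [Abelian C] [Abelian D] {F : C ⥤ D} {G : D ⥤ C}
    {M : C} (hM : IsGorensteinProjective M) (adj₁ : F ⊣ G) (adj₂ : G ⊣ F) :
    IsGorensteinProjective (F.obj M) := by
  obtain ⟨P, hproj, hexact, ⟨e⟩, hlift⟩ := hM
  have := adj₁.isLeftAdjoint
  have := adj₂.isRightAdjoint
  have := adj₂.isLeftAdjoint
  refine ⟨(F.mapHomologicalComplex _).obj P, fun n => adj₁.map_projective _ (hproj n),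
    fun n => (hexact n).map F, ⟨F.mapIso e ≪≫ ((P.sc 0).mapCyclesIso F).symm⟩,
    fun Q hQ n =>
      adj₁.exists_map_comp_eq_of_comp_eq_zero _ _ (hlift _ (adj₂.map_projective Q hQ) n)⟩

lemma IsPrecover.map_comp_app_of_isSplitEpi {𝒳 : C → Prop} {𝒴 : D → Prop}
    {F : C ⥤ D} {G : D ⥤ C} (ε : G ⋙ F ⟶ 𝟭 D) (hε : ∀ Y, IsSplitEpi (ε.app Y))
    (hF : ∀ X, 𝒳 X → 𝒴 (F.obj X)) (hG : ∀ Y, 𝒴 Y → 𝒳 (G.obj Y))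
    {X : C} {N : D} {φ : X ⟶ G.obj N} (hφ : IsPrecover 𝒳 φ) :
    IsPrecover 𝒴 (F.map φ ≫ ε.app N) := by
  refine ⟨hF X hφ.1, fun Y hY f => ?_⟩
  obtain ⟨g, hg⟩ := hφ.2 (G.obj Y) (hG Y hY) (G.map f)
  refine ⟨section_ (ε.app Y) ≫ F.map g, ?_⟩
  calc (section_ (ε.app Y) ≫ F.map g) ≫ F.map φ ≫ ε.app N
      = section_ (ε.app Y) ≫ F.map (G.map f) ≫ ε.app N := by
        rw [Category.assoc, ← F.map_comp_assoc, hg]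
    _ = f := by
        simpa using section_ (ε.app Y) ≫= ε.naturality f

end

theorem gp_precovering_of_separable_right_general {C D : Type*} [Category C] [Category D]
    [Abelian C] [Abelian D]
    (F : C ⥤ D) (G : D ⥤ C)
    (adj₁ : F ⊣ G) (adj₂ : G ⊣ F)
    (hsep : ∃ ξ : 𝟭 D ⟶ G ⋙ F, ξ ≫ adj₁.counit = 𝟙 (𝟭 D))
    (hC : ∀ M : C, ∃ (X : C) (φ : X ⟶ M), IsPrecover (IsGorensteinProjective (A := C)) φ) :
    ∀ N : D, ∃ (Y : D) (φ : Y ⟶ N), IsPrecover (IsGorensteinProjective (A := D)) φ := by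
  obtain ⟨ξ, hξ⟩ := hsep
  have hε (Y : D) : IsSplitEpi (adj₁.counit.app Y) :=
    ⟨⟨⟨ξ.app Y, NatTrans.congr_app hξ Y⟩⟩⟩
  intro N
  obtain ⟨X, φ, hφ⟩ := hC (G.obj N)
  exact ⟨F.obj X, _, hφ.map_comp_app_of_isSplitEpi adj₁.counit hε
    (fun _ hX => hX.map adj₁ adj₂) (fun _ hY => hY.map adj₂ adj₁)⟩

/-- If `(F, G)` is a Frobenius pair between abelian categories with enough projectives,
`G` is separable (the counit of `F ⊣ G` has a natural section), and the Gorenstein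
projective objects are precovering in `C`, then they are precovering in `D`. -/
theorem gp_precovering_of_separable_right {C D : Type*} [Category C] [Category D]
    [Abelian C] [Abelian D] [EnoughProjectives C] [EnoughProjectives D]
    (F : C ⥤ D) (G : D ⥤ C) [F.Additive] [G.Additive]
    (adj₁ : F ⊣ G) (adj₂ : G ⊣ F)
    (hsep : ∃ ξ : 𝟭 D ⟶ G ⋙ F, ξ ≫ adj₁.counit = 𝟙 (𝟭 D))
    (hC : ∀ M : C, ∃ (X : C) (φ : X ⟶ M), IsPrecover (IsGorensteinProjective (A := C)) φ) :
    ∀ N : D, ∃ (Y : D) (φ : Y ⟶ N), IsPrecover (IsGorensteinProjective (A := D)) φ :=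
  gp_precovering_of_separable_right_general F G adj₁ adj₂ hsep hC
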